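/- In a median graph, the distance between any two vertices x and y equals the number of half-spaces containing y but not x. -/
import Mathlib


open SimpleGraph

variable {X : Type*}

/-- The geodesic interval between `x` and `y`. -/
def interval (G : SimpleGraph X) (x y : X) : Set X :=
  {z | G.dist x z + G.dist z y = G.dist x y}

/-- A set is convex if it contains all geodesics between its points. -/
def IsConvexSet (G : SimpleGraph X) (A : Set X) : Prop :=
  ∀ x ∈ A, ∀ y ∈ A, interval G x y ⊆ A

/-- A median graph: connected, and every triple has a unique median. -/
def IsMedianGraph (G : SimpleGraph X) : Prop :=
  G.Connected ∧ ∀ x y z : X, ∃! m : X,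
    m ∈ interval G x y ∧ m ∈ interval G y z ∧ m ∈ interval G z x

/-- The cone at `y` away from `x`. -/
def cone (G : SimpleGraph X) (x y : X) : Set X :=
  {z | y ∈ interval G x z}

/-- A half-space: a convex set with convex complement. -/
def IsHalfspace (G : SimpleGraph X) (H : Set X) : Prop :=
  IsConvexSet G H ∧ IsConvexSet G Hᶜ

/-- Convex hull. -/
def convexHullG (G : SimpleGraph X) (A : Set X) : Set X :=
  ⋂₀ {B : Set X | IsConvexSet G B ∧ A ⊆ B}

/-- Inward edge boundary of a set. -/
def edgeBoundaryIn (G : SimpleGraph X) (H : Set X) : Set (X × X) :=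
  {e | G.Adj e.1 e.2 ∧ e.1 ∉ H ∧ e.2 ∈ H}

/-- Two sets are nested if one of the four corners is empty. -/
def Nested (A B : Set X) : Prop :=
  A ∩ B = ∅ ∨ A ∩ Bᶜ = ∅ ∨ Aᶜ ∩ B = ∅ ∨ Aᶜ ∩ Bᶜ = ∅

open Classical in
noncomputable def medianOf (G : SimpleGraph X) (x y z : X) : X :=
  if h : ∃! m : X, m ∈ interval G x y ∧ m ∈ interval G y z ∧ m ∈ interval G z x
  then h.choose else x

open Classical in
noncomputable def projOn (G : SimpleGraph X) (A : Set X) (x : X) : X :=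
  if h : ∃ p, p ∈ A ∧ ∀ a ∈ A, p ∈ interval G x a then h.choose else x


/-- Edges crossing out of a set. -/
def crossEdges (G : SimpleGraph X) (A : Set X) : Set (X × X) :=
  {e | G.Adj e.1 e.2 ∧ e.1 ∈ A ∧ e.2 ∉ A}

/-- Total vertex boundary of a set. -/
def vBoundary (G : SimpleGraph X) (A : Set X) : Set X :=
  {x | ∃ y, G.Adj x y ∧ ((x ∈ A ∧ y ∉ A) ∨ (x ∉ A ∧ y ∈ A))}

/-- Two sets are non-nested if all four corners are nonempty. -/
def NonNested (A B : Set X) : Prop :=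
  (A ∩ B).Nonempty ∧ (A ∩ Bᶜ).Nonempty ∧ (Aᶜ ∩ B).Nonempty ∧ (Aᶜ ∩ Bᶜ).Nonempty

/-- `H` is a successor of `K`: both are half-spaces, `K ⊊ H`, with no half-space
strictly in between. -/
def Successor (G : SimpleGraph X) (H K : Set X) : Prop :=
  IsHalfspace G H ∧ IsHalfspace G K ∧ K ⊂ H ∧
    ¬ ∃ L : Set X, IsHalfspace G L ∧ K ⊂ L ∧ L ⊂ H

/-- Adjacency of the hyperplanes of half-spaces `H`, `K`. -/
def HypAdj (G : SimpleGraph X) (H K : Set X) : Prop :=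
  H = K ∨ H = Kᶜ ∨ NonNested H K ∨
  Successor G H K ∨ Successor G K H ∨
  Successor G Hᶜ K ∨ Successor G K Hᶜ ∨
  Successor G H Kᶜ ∨ Successor G Kᶜ H ∨
  Successor G Hᶜ Kᶜ ∨ Successor G Kᶜ Hᶜ

/-- The Hamming cube on `{0,1}^n`: strings adjacent iff they differ in exactly one bit. -/
def hammingCube (n : ℕ) : SimpleGraph (Fin n → Bool) :=
  SimpleGraph.fromRel (fun a b => ∃! i : Fin n, a i ≠ b i)

/-- Oriented edges `e`, `f` are parallel sides of a square (4-cycle). -/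
def SquareParallel (G : SimpleGraph X) (e f : X × X) : Prop :=
  G.Adj e.1 e.2 ∧ G.Adj f.1 f.2 ∧ G.Adj e.1 f.1 ∧ G.Adj e.2 f.2 ∧ e.1 ≠ f.2 ∧ e.2 ≠ f.1

section aux

variable {G : SimpleGraph X}

lemma mem_interval' {x y z : X} :
    z ∈ interval G x y ↔ G.dist x z + G.dist z y = G.dist x y := Iff.rfl

lemma dcomm (G : SimpleGraph X) (a b : X) : G.dist a b = G.dist b a :=
  SimpleGraph.dist_comm

lemma mem_cone' {u v z : X} :
    z ∈ cone G u v ↔ G.dist u v + G.dist v z = G.dist u z := Iff.rfl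

/-- "Bipartite" lemma: for an edge `uv`, no vertex is equidistant from `u` and `v`. -/
lemma dist_ne_of_adj (hG : IsMedianGraph G) {u v : X} (h : G.Adj u v) (z : X) :
    G.dist z u ≠ G.dist z v := by
  obtain ⟨hc, hm⟩ := hG
  obtain ⟨m, ⟨h1, h2, h3⟩, -⟩ := hm z u v
  rw [mem_interval'] at h1 h2 h3
  have huv : G.dist u v = 1 := dist_eq_one_iff_adj.mpr h
  rw [huv] at h2
  have huv' : G.dist v u = 1 := dist_eq_one_iff_adj.mpr h.symm
  have c1 := dcomm G z u
  have c2 := dcomm G z v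
  have c3 := dcomm G z m
  have c4 := dcomm G u m
  have c5 := dcomm G v m
  rcases Nat.add_eq_one_iff.mp h2 with ⟨hm0, _⟩ | ⟨_, hm0⟩
  · have he : u = m := (hc.dist_eq_zero_iff).mp hm0
    subst he
    have z1 := dcomm G u z
    have z2 := dcomm G v z
    omega
  · have he : m = v := (hc.dist_eq_zero_iff).mp hm0
    rw [he] at h1
    omega

/-- For an edge `uv`, distances to any vertex differ by exactly one. -/
lemma adj_step (hG : IsMedianGraph G) {u v : X} (h : G.Adj u v) (z : X) :
    G.dist u z = G.dist v z + 1 ∨ G.dist v z = G.dist u z + 1 := by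
  have hc := hG.1
  have t1 : G.dist u z ≤ G.dist u v + G.dist v z := hc.dist_triangle
  have t2 : G.dist v z ≤ G.dist v u + G.dist u z := hc.dist_triangle
  have huv : G.dist u v = 1 := dist_eq_one_iff_adj.mpr h
  have hvu : G.dist v u = 1 := dist_eq_one_iff_adj.mpr h.symm
  have hne := dist_ne_of_adj hG h z
  rw [dcomm G z u, dcomm G z v] at hne
  omega

lemma mem_cone_iff (hG : IsMedianGraph G) {u v : X} (h : G.Adj u v) {z : X} :
    z ∈ cone G u v ↔ G.dist u z = G.dist v z + 1 := by
  rw [mem_cone', dist_eq_one_iff_adj.mpr h]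
  omega

lemma notMem_cone_iff (hG : IsMedianGraph G) {u v : X} (h : G.Adj u v) {z : X} :
    z ∉ cone G u v ↔ z ∈ cone G v u := by
  rw [mem_cone_iff hG h, mem_cone_iff hG h.symm]
  rcases adj_step hG h z with hs | hs <;> omega

/-- star-shape of cones. -/
lemma interval_subset_cone (hG : IsMedianGraph G) {u v : X} (h : G.Adj u v) {z : X}
    (hz : z ∈ cone G u v) : interval G v z ⊆ cone G u v := by
  intro w hw
  rw [mem_interval'] at hw
  rw [mem_cone_iff hG h] at hz ⊢
  have t1 : G.dist u z ≤ G.dist u w + G.dist w z := hG.1.dist_triangle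
  have t2 : G.dist u w ≤ G.dist u v + G.dist v w := hG.1.dist_triangle
  have huv : G.dist u v = 1 := dist_eq_one_iff_adj.mpr h
  rcases adj_step hG h w with hs | hs <;> omega

lemma dist_getVert_le (hc : G.Connected) {a b : X} (p : G.Walk a b) (i k : ℕ) :
    G.dist (p.getVert i) (p.getVert (i + k)) ≤ k := by
  induction k with
  | zero => simp [SimpleGraph.dist_self]
  | succ k ih =>
    have t : G.dist (p.getVert i) (p.getVert (i + (k+1))) ≤
        G.dist (p.getVert i) (p.getVert (i + k)) +
          G.dist (p.getVert (i + k)) (p.getVert (i + k + 1)) := hc.dist_triangle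
    have hlast : G.dist (p.getVert (i + k)) (p.getVert (i + k + 1)) ≤ 1 := by
      by_cases hl : i + k < p.length
      · exact le_of_eq (dist_eq_one_iff_adj.mpr (p.adj_getVert_succ hl))
      · push_neg at hl
        rw [p.getVert_of_length_le hl, p.getVert_of_length_le (le_trans hl (Nat.le_succ _))]
        simp [SimpleGraph.dist_self]
    have heq : i + (k + 1) = i + k + 1 := rfl
    rw [heq] at t ⊢
    omega

lemma exists_adj_dist (hc : G.Connected) {a c : X} {m : ℕ} (h : G.dist a c = m + 1) :
    ∃ q, G.Adj c q ∧ G.dist a q = m := by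
  obtain ⟨p, hp⟩ := (hc a c).exists_walk_length_eq_dist
  refine ⟨p.getVert m, ?_, ?_⟩
  · have hm : m < p.length := by omega
    have := p.adj_getVert_succ hm
    have hgl : p.getVert (m + 1) = c := by
      have : p.length ≤ m + 1 := by omega
      exact p.getVert_of_length_le this
    rw [hgl] at this
    exact this.symm
  · have h1 : G.dist a (p.getVert m) ≤ m := by
      have := dist_getVert_le hc p 0 m
      simpa using this
    have h2 : G.dist a c ≤ G.dist a (p.getVert m) + G.dist (p.getVert m) c := hc.dist_triangle
    have h3 : G.dist (p.getVert m) c ≤ 1 := by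
      have hm : m < p.length := by omega
      have := p.adj_getVert_succ hm
      have hgl : p.getVert (m + 1) = c := p.getVert_of_length_le (by omega)
      rw [hgl] at this
      exact le_of_eq (dist_eq_one_iff_adj.mpr this)
    omega


/-- Key base case: two vertices of the cone at distance 2 cannot have a common
neighbour outside the cone. -/
lemma base_square (hG : IsMedianGraph G) {u y p1 p2 q : X} (huy : G.Adj u y)
    (h1 : p1 ∈ cone G u y) (h2 : p2 ∈ cone G u y) (hq : q ∉ cone G u y)
    (a1 : G.Adj q p1) (a2 : G.Adj q p2) (hd : G.dist p1 p2 = 2) : False := by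
  have hc := hG.1
  have hm := hG.2
  rw [mem_cone_iff hG huy] at h1 h2
  rw [notMem_cone_iff hG huy, mem_cone_iff hG huy.symm] at hq
  have huy1 : G.dist u y = 1 := dist_eq_one_iff_adj.mpr huy
  have dqp1 : G.dist q p1 = 1 := dist_eq_one_iff_adj.mpr a1
  have dqp2 : G.dist q p2 = 1 := dist_eq_one_iff_adj.mpr a2
  -- localize q
  have s1 := adj_step hG a1 u
  have s2 := adj_step hG a1 y
  have s3 := adj_step hG a2 u
  have s4 := adj_step hG a2 y
  have c1 := dcomm G u p1; have c2 := dcomm G u p2; have c3 := dcomm G u q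
  have c4 := dcomm G y p1; have c5 := dcomm G y p2; have c6 := dcomm G y q
  have huq : G.dist u q = G.dist y p1 := by omega
  have hyq : G.dist y q = G.dist y p1 + 1 := by omega
  have hyp2 : G.dist y p2 = G.dist y p1 := by omega
  -- the distance k is at least 1
  rcases Nat.eq_zero_or_pos (G.dist y p1) with hk0 | hkpos
  · have e1 : y = p1 := hc.dist_eq_zero_iff.mp (by omega)
    have e2 : y = p2 := hc.dist_eq_zero_iff.mp (by omega)
    rw [← e1, ← e2] at hd
    simp [SimpleGraph.dist_self] at hd
  -- the median w of (y, p1, p2)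
  obtain ⟨w, ⟨w1, w2, w3⟩, -⟩ := hm y p1 p2
  rw [mem_interval'] at w1 w2 w3
  rw [hd] at w2
  have c7 := dcomm G y w; have c8 := dcomm G p1 w; have c9 := dcomm G p2 w
  have dwp1 : G.dist w p1 = 1 := by omega
  have dwp2 : G.dist w p2 = 1 := by omega
  have dyw : G.dist y w + 1 = G.dist y p1 := by omega
  have awp1 : G.Adj w p1 := dist_eq_one_iff_adj.mp dwp1
  have t1 : G.dist u w ≤ G.dist u y + G.dist y w := hc.dist_triangle
  have t2 : G.dist u p1 ≤ G.dist u w + G.dist w p1 := hc.dist_triangle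
  have s5 := adj_step hG awp1 u
  have duw : G.dist u w = G.dist y p1 := by omega
  -- q and w are distinct and non-adjacent, at distance 2
  have hqw : q ≠ w := by
    intro he; rw [he] at hyq
    have := dcomm G y w
    omega
  have hnadj : ¬ G.Adj q w := by
    intro hadj
    have hne := dist_ne_of_adj hG hadj p1
    have d1 := dcomm G p1 q; have d2 := dcomm G p1 w
    omega
  have dqw : G.dist q w = 2 := by
    have h0 : G.dist q w ≠ 0 := fun h0 => hqw (hc.dist_eq_zero_iff.mp h0)
    have hn1 : G.dist q w ≠ 1 := fun h1 => hnadj (dist_eq_one_iff_adj.mp h1)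
    have t : G.dist q w ≤ G.dist q p1 + G.dist p1 w := hc.dist_triangle
    omega
  -- the median m of (u, q, w)
  obtain ⟨m, ⟨m1, m2, m3⟩, -⟩ := hm u q w
  rw [mem_interval'] at m1 m2 m3
  have c10 := dcomm G u m; have c11 := dcomm G q m; have c12 := dcomm G w m
  have c13 := dcomm G q w; have c14 := dcomm G u w; have c15 := dcomm G u q
  have dmq : G.dist m q = 1 := by omega
  have dmw : G.dist m w = 1 := by omega
  have dum : G.dist u m + 1 = G.dist y p1 := by omega
  -- m is at distance 2 from p1 and p2
  have dp1m : G.dist p1 m = 2 := by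
    have hne : p1 ≠ m := by
      intro he; rw [← he] at dum; omega
    have hna : ¬ G.Adj p1 m := by
      intro hadj
      have := dist_ne_of_adj hG hadj q
      have d1 := dcomm G q p1
      omega
    have h0 : G.dist p1 m ≠ 0 := fun h0 => hne (hc.dist_eq_zero_iff.mp h0)
    have hn1 : G.dist p1 m ≠ 1 := fun h1 => hna (dist_eq_one_iff_adj.mp h1)
    have t : G.dist p1 m ≤ G.dist p1 q + G.dist q m := hc.dist_triangle
    have d1 := dcomm G q p1
    omega
  have dp2m : G.dist p2 m = 2 := by
    have hne : p2 ≠ m := by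
      intro he; rw [← he] at dum; omega
    have hna : ¬ G.Adj p2 m := by
      intro hadj
      have := dist_ne_of_adj hG hadj q
      have d1 := dcomm G q p2
      omega
    have h0 : G.dist p2 m ≠ 0 := fun h0 => hne (hc.dist_eq_zero_iff.mp h0)
    have hn1 : G.dist p2 m ≠ 1 := fun h1 => hna (dist_eq_one_iff_adj.mp h1)
    have t : G.dist p2 m ≤ G.dist p2 q + G.dist q m := hc.dist_triangle
    have d1 := dcomm G q p2
    omega
  -- both q and w are medians of (p1, p2, m): contradiction with uniqueness
  obtain ⟨c, -, hcu⟩ := hm p1 p2 m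
  have d1 := dcomm G p1 q; have d2 := dcomm G p2 q
  have d3 := dcomm G p1 w; have d4 := dcomm G p2 w
  have d5 := dcomm G m q; have d6 := dcomm G m w
  have d7 := dcomm G p1 m; have d8 := dcomm G p2 m
  have hqmed : q = c := hcu q ⟨by rw [mem_interval']; omega,
    by rw [mem_interval']; omega, by rw [mem_interval']; omega⟩
  have hwmed : w = c := hcu w ⟨by rw [mem_interval']; omega,
    by rw [mem_interval']; omega, by rw [mem_interval']; omega⟩
  exact hqw (hqmed.trans hwmed.symm)

/-- Crossing lemma: an edge leaving the cone cannot lie on a geodesic between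
two vertices of the cone. -/
lemma crossS (hG : IsMedianGraph G) {u y : X} (huy : G.Adj u y) :
    ∀ N a n b, G.dist n b = N → G.Adj a n → a ∈ cone G u y → b ∈ cone G u y →
      n ∉ cone G u y → n ∈ interval G a b → False := by
  have hc := hG.1
  have hm := hG.2
  intro N
  induction N using Nat.strong_induction_on with
  | _ N IH =>
  intro a n b hN han ha hb hn hnab
  have dan : G.dist a n = 1 := dist_eq_one_iff_adj.mpr han
  rw [mem_interval'] at hnab
  -- the median r0 of (y, n, b) is in the cone
  obtain ⟨r0, ⟨r01, r02, r03⟩, -⟩ := hm y n b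
  rw [mem_interval'] at r01 r02 r03
  have hr0cone : r0 ∈ cone G u y := by
    apply interval_subset_cone hG huy hb
    rw [mem_interval']
    have e1 := dcomm G y r0; have e2 := dcomm G b r0; have e3 := dcomm G y b
    omega
  by_cases hr0n : r0 = n
  · rw [hr0n] at hr0cone; exact hn hr0cone
  have hd0 : G.dist r0 n ≠ 0 := fun h0 => hr0n (hc.dist_eq_zero_iff.mp h0)
  obtain ⟨M, hM⟩ : ∃ M, G.dist r0 n = M + 1 := ⟨G.dist r0 n - 1, by omega⟩
  obtain ⟨r, hnr, hr0r⟩ := exists_adj_dist hc hM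
  have dnr : G.dist n r = 1 := dist_eq_one_iff_adj.mpr hnr
  have e1 := dcomm G r0 n; have e2 := dcomm G r0 r; have e3 := dcomm G n r
  -- r is one step from n towards b
  have drb : G.dist r b + 1 = G.dist n b := by
    have t1 : G.dist n b ≤ G.dist n r + G.dist r b := hc.dist_triangle
    have t2 : G.dist r b ≤ G.dist r r0 + G.dist r0 b := hc.dist_triangle
    omega
  by_cases hrcone : r ∈ cone G u y
  · -- square: a, r in the cone, common neighbour n outside
    have hanr : a ≠ r := by
      intro he; rw [he] at hnab
      have := dcomm G r n
      omega
    have hnadj : ¬ G.Adj a r := by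
      intro hadj
      have hne := dist_ne_of_adj hG hadj n
      have f1 := dcomm G n a
      omega
    have dar : G.dist a r = 2 := by
      have h0 : G.dist a r ≠ 0 := fun h0 => hanr (hc.dist_eq_zero_iff.mp h0)
      have h1 : G.dist a r ≠ 1 := fun h1 => hnadj (dist_eq_one_iff_adj.mp h1)
      have t : G.dist a r ≤ G.dist a n + G.dist n r := hc.dist_triangle
      omega
    exact base_square hG huy ha hrcone hn han.symm hnr dar
  · -- move the crossing edge one step closer to b
    have dyr : G.dist y r + 1 = G.dist y n := by
      have t1 : G.dist y r ≤ G.dist y r0 + G.dist r0 r := hc.dist_triangle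
      have t2 : G.dist y n ≤ G.dist y r + G.dist r n := hc.dist_triangle
      omega
    have ha' := (mem_cone_iff hG huy).mp ha
    have hn' := (notMem_cone_iff hG huy).mp hn
    rw [mem_cone_iff hG huy.symm] at hn'
    have hr' := (notMem_cone_iff hG huy).mp hrcone
    rw [mem_cone_iff hG huy.symm] at hr'
    have s1 := adj_step hG han u
    have s2 := adj_step hG han y
    have f1 := dcomm G u a; have f2 := dcomm G u n; have f3 := dcomm G y a
    have f4 := dcomm G y n; have f5 := dcomm G y r; have f6 := dcomm G u r
    have dyn : G.dist y n = G.dist y a + 1 := by omega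
    have dyr' : G.dist y r = G.dist y a := by omega
    -- the median s of (y, a, r)
    have hanr : a ≠ r := by
      intro he; rw [← he] at hr'
      omega
    have hnadj : ¬ G.Adj a r := by
      intro hadj
      have hne := dist_ne_of_adj hG hadj n
      have g1 := dcomm G n a
      omega
    have dar : G.dist a r = 2 := by
      have h0 : G.dist a r ≠ 0 := fun h0 => hanr (hc.dist_eq_zero_iff.mp h0)
      have h1 : G.dist a r ≠ 1 := fun h1 => hnadj (dist_eq_one_iff_adj.mp h1)
      have t : G.dist a r ≤ G.dist a n + G.dist n r := hc.dist_triangle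
      omega
    obtain ⟨s, ⟨s1', s2', s3'⟩, -⟩ := hm y a r
    rw [mem_interval'] at s1' s2' s3'
    rw [dar] at s2'
    have g1 := dcomm G y s; have g2 := dcomm G a s; have g3 := dcomm G r s
    have dsa : G.dist s a = 1 := by omega
    have dsr : G.dist s r = 1 := by omega
    have hscone : s ∈ cone G u y := by
      apply interval_subset_cone hG huy ha
      rw [mem_interval']
      omega
    have hsr : G.Adj s r := dist_eq_one_iff_adj.mp dsr
    have hrsb : r ∈ interval G s b := by
      rw [mem_interval']
      have t1 : G.dist a b ≤ G.dist a s + G.dist s b := hc.dist_triangle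
      have t2 : G.dist s b ≤ G.dist s r + G.dist r b := hc.dist_triangle
      omega
    exact IH (G.dist r b) (by omega) s r b rfl hsr hscone hb hrcone hrsb

/-- Cones over edges are convex. -/
lemma cone_convex (hG : IsMedianGraph G) {u y : X} (huy : G.Adj u y) :
    IsConvexSet G (cone G u y) := by
  have hc := hG.1
  suffices h : ∀ M a b c, G.dist a c = M → a ∈ cone G u y → b ∈ cone G u y →
      c ∈ interval G a b → c ∈ cone G u y by
    intro a ha b hb c hcmem
    exact h (G.dist a c) a b c rfl ha hb hcmem
  intro M
  induction M using Nat.strong_induction_on with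
  | _ M IH =>
  intro a b c hM ha hb hcab
  by_contra hcn
  have hac : a ≠ c := fun he => hcn (he ▸ ha)
  have hd0 : G.dist a c ≠ 0 := fun h0 => hac (hc.dist_eq_zero_iff.mp h0)
  obtain ⟨m, hm'⟩ : ∃ m, G.dist a c = m + 1 := ⟨G.dist a c - 1, by omega⟩
  obtain ⟨q, hcq, haq⟩ := exists_adj_dist hc hm'
  have dcq : G.dist c q = 1 := dist_eq_one_iff_adj.mpr hcq
  rw [mem_interval'] at hcab
  have tqb : G.dist q b ≤ G.dist q c + G.dist c b := hc.dist_triangle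
  have tab : G.dist a b ≤ G.dist a q + G.dist q b := hc.dist_triangle
  have cqc := dcomm G c q
  by_cases hqcone : q ∈ cone G u y
  · exact crossS hG huy (G.dist c b) q c b rfl hcq.symm hqcone hb hcn
      (by rw [mem_interval']; omega)
  · exact hqcone (IH m (by omega) a b q haq ha hb (by rw [mem_interval']; omega))

lemma cone_compl (hG : IsMedianGraph G) {u y : X} (huy : G.Adj u y) :
    (cone G u y)ᶜ = cone G y u := by
  ext z
  simp only [Set.mem_compl_iff]
  exact notMem_cone_iff hG huy

lemma isHalfspace_cone (hG : IsMedianGraph G) {u y : X} (huy : G.Adj u y) :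
    IsHalfspace G (cone G u y) :=
  ⟨cone_convex hG huy, by
    rw [cone_compl hG huy]; exact cone_convex hG huy.symm⟩

/-- Rigidity: a half-space containing `p` but not its neighbour `q` is the cone. -/
lemma halfspace_eq_cone (hG : IsMedianGraph G) {H : Set X} (hH : IsHalfspace G H)
    {p q : X} (ha : G.Adj q p) (hp : p ∈ H) (hq : q ∉ H) : H = cone G q p := by
  have hc := hG.1
  ext w
  constructor
  · intro hw
    by_contra hwc
    rw [notMem_cone_iff hG ha, mem_cone_iff hG ha.symm] at hwc
    have hmem : q ∈ interval G p w := by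
      rw [mem_interval']
      have := dist_eq_one_iff_adj.mpr ha.symm
      omega
    exact hq (hH.1 p hp w hw hmem)
  · intro hw
    rw [mem_cone_iff hG ha] at hw
    by_contra hwH
    have hmem : p ∈ interval G q w := by
      rw [mem_interval']
      have := dist_eq_one_iff_adj.mpr ha
      omega
    exact (hH.2 q hq w hwH hmem) hp

/-- Distances along a geodesic walk. -/
lemma geodesic_dist (hc : G.Connected) {x y : X} (p : G.Walk x y)
    (hp : p.length = G.dist x y) {i j : ℕ} (hij : i ≤ j) (hj : j ≤ p.length) :
    G.dist (p.getVert i) (p.getVert j) + i = j ∧ G.dist x (p.getVert i) = i ∧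
      G.dist (p.getVert j) y + j = p.length := by
  have h1 : G.dist x (p.getVert i) ≤ i := by simpa using dist_getVert_le hc p 0 i
  have h2 : G.dist (p.getVert i) (p.getVert j) ≤ j - i := by
    have := dist_getVert_le hc p i (j - i)
    rwa [Nat.add_sub_cancel' hij] at this
  have h3 : G.dist (p.getVert j) y ≤ p.length - j := by
    have := dist_getVert_le hc p j (p.length - j)
    rwa [Nat.add_sub_cancel' hj, p.getVert_length] at this
  have t1 : G.dist x y ≤ G.dist x (p.getVert i) + G.dist (p.getVert i) y :=
    hc.dist_triangle
  have t2 : G.dist (p.getVert i) y ≤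
      G.dist (p.getVert i) (p.getVert j) + G.dist (p.getVert j) y := hc.dist_triangle
  omega

end aux
theorem dist_eq_ncard_halfspaces (G : SimpleGraph X) (hG : IsMedianGraph G) (x y : X) :
    G.dist x y = {H : Set X | IsHalfspace G H ∧ y ∈ H ∧ x ∉ H}.ncard := by
  classical
  have hc := hG.1
  obtain ⟨p, hp⟩ := (hc x y).exists_walk_length_eq_dist
  have hpl : p.length = G.dist x y := hp
  have key : {H : Set X | IsHalfspace G H ∧ y ∈ H ∧ x ∉ H} =
      (fun i => cone G (p.getVert i) (p.getVert (i + 1))) '' ↑(Finset.range (G.dist x y)) := by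
    ext H
    simp only [Set.mem_setOf_eq, Set.mem_image, Finset.coe_range, Set.mem_Iio]
    constructor
    · rintro ⟨hH, hyH, hxH⟩
      have hyd : p.getVert (G.dist x y) = y := by
        rw [← hpl]; exact p.getVert_length
      have hex : ∃ i, p.getVert i ∈ H := ⟨G.dist x y, by rw [hyd]; exact hyH⟩
      set i0 := Nat.find hex with hi0
      have hspec : p.getVert i0 ∈ H := Nat.find_spec hex
      have hi0le : i0 ≤ G.dist x y := Nat.find_le (by rw [hyd]; exact hyH)
      have hi0ne : i0 ≠ 0 := by
        intro h0
        rw [h0, p.getVert_zero] at hspec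
        exact hxH hspec
      obtain ⟨m, hm0⟩ : ∃ m, i0 = m + 1 := ⟨i0 - 1, by omega⟩
      have hmnot : p.getVert m ∉ H := Nat.find_min hex (by omega)
      have hadj : G.Adj (p.getVert m) (p.getVert (m + 1)) :=
        p.adj_getVert_succ (by omega)
      have hcone : H = cone G (p.getVert m) (p.getVert (m + 1)) := by
        have := halfspace_eq_cone hG hH hadj (by rw [← hm0]; exact hspec) hmnot
        exact this
      exact ⟨m, by omega, hcone.symm⟩
    · rintro ⟨i, hid, rfl⟩
      have hadj : G.Adj (p.getVert i) (p.getVert (i + 1)) :=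
        p.adj_getVert_succ (by omega)
      have gi := geodesic_dist hc p hpl (le_refl i) (by omega)
      have gi1 := geodesic_dist hc p hpl (le_refl (i + 1)) (by omega)
      refine ⟨isHalfspace_cone hG hadj, ?_, ?_⟩
      · rw [mem_cone_iff hG hadj]
        have e1 := dcomm G (p.getVert i) y
        have e2 := dcomm G (p.getVert (i + 1)) y
        obtain ⟨-, -, g3⟩ := gi
        obtain ⟨-, -, g4⟩ := gi1
        omega
      · intro hx
        have hx' := (mem_cone_iff hG hadj).mp hx
        obtain ⟨-, g2, -⟩ := gi
        obtain ⟨-, g5, -⟩ := gi1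
        have e1 := dcomm G x (p.getVert i)
        have e2 := dcomm G x (p.getVert (i + 1))
        omega
  rw [key]
  have hinj : Set.InjOn (fun i => cone G (p.getVert i) (p.getVert (i + 1)))
      ↑(Finset.range (G.dist x y)) := by
    have main : ∀ i j : ℕ, i < G.dist x y → j < G.dist x y → i < j →
        cone G (p.getVert i) (p.getVert (i + 1)) ≠
          cone G (p.getVert j) (p.getVert (j + 1)) := by
      intro i j hi hj hij heq
      have hadji : G.Adj (p.getVert i) (p.getVert (i + 1)) :=
        p.adj_getVert_succ (by omega)
      have hadjj : G.Adj (p.getVert j) (p.getVert (j + 1)) :=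
        p.adj_getVert_succ (by omega)
      have hmemi : p.getVert (i + 1) ∈ cone G (p.getVert i) (p.getVert (i + 1)) := by
        rw [mem_cone_iff hG hadji]
        have g := (geodesic_dist hc p hpl (show i ≤ i + 1 by omega) (by omega)).1
        have := SimpleGraph.dist_self (G := G) (v := p.getVert (i + 1))
        omega
      rw [heq, mem_cone_iff hG hadjj] at hmemi
      have g1 := (geodesic_dist hc p hpl (show i + 1 ≤ j by omega) (by omega)).1
      have g2 := (geodesic_dist hc p hpl (show i + 1 ≤ j + 1 by omega) (by omega)).1
      have e1 := dcomm G (p.getVert (i + 1)) (p.getVert j)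
      have e2 := dcomm G (p.getVert (i + 1)) (p.getVert (j + 1))
      omega
    intro i hi j hj heq
    simp only [Finset.coe_range, Set.mem_Iio] at hi hj
    by_contra hne
    rcases Nat.lt_or_ge i j with h | h
    · exact main i j hi hj h heq
    · have : j < i := by omega
      exact main j i hj hi this heq.symm
  rw [Set.ncard_image_of_injOn hinj, Set.ncard_coe_finset, Finset.card_range]
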